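/- arXiv:2502.09221 — 4 statements merged into one kernel-verified Lean document; each statement's English description precedes it below -/
import Mathlib

section
/- Let Π be an EASP program and 𝒯 a nonempty collection of valuations. Then 𝒯 is a relational epistemic equilibrium model (EEM) of the translation Π* if and only if: (i) (𝒯,T) ⊨ Π^⟨𝒯,T⟩ for every T ∈ 𝒯, and (ii) for every serial multivalued subset function ρ on 𝒯 with ρ ≠ id there exist T′ ∈ 𝒯 and H′ ∈ ρ(T′) such that the indexed family of all sets H with H ∈ ρ(T) for T ∈ 𝒯, viewed as an S5-model (treated as a multiset, so K p holds iff p belongs to every member and K̂ p iff p belongs to some member), does not satisfy the reduct Π^⟨𝒯,T′⟩ at the point H′. -/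
/-!
A literal true in the family of "here" worlds of `M_ρ` is true in `M` itself, since every
`ρ T` is a nonempty set of subsets of `T`. In `M_ρ` the EHT negation `¬λ` is also evaluated
at the "there" point `(T, T)` of `M_id`, so by this persistence it holds at `(H, T)` exactly
when `(M, T) ⊭ λ`, i.e. it behaves like its reduct. Hence a rule of `Π*` holds at `(H, T)`
iff its reduct w.r.t. `(M, T)` holds at `H` in the family of "here" worlds and the rule
holds at `(T, T)` in `M_id`; and at `(T, T)` in `M_id` the rule holds iff its reduct holds
at `(M, T)`.
-/

attribute [local instance] Classical.propDecidable

namespace EASP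

/-- Valuations over a countable set of atoms (atoms = ℕ). -/
abbrev Val := Set ℕ

/-- EASP literals: objective atoms `obj p`, and subjective literals `K p`, `K̂ p`. -/
inductive Lit : Type where
  | obj : ℕ → Lit
  | k : ℕ → Lit
  | khat : ℕ → Lit

/-- Body conjuncts: a literal, a `not`-negated literal, or the constants ⊤ / ⊥. -/
inductive BLit : Type where
  | pos : Lit → BLit
  | neg : Lit → BLit
  | top : BLit
  | bot : BLit

/-- An EASP rule: head is a disjunction of literals (⊥ if empty),
body is a conjunction of body conjuncts. -/
structure Rule : Type where
  head : List Lit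
  body : List BLit

/-- An EASP program: a finite collection of rules. -/
abbrev Program := List Rule

/-- Pointed S5 satisfaction of a literal, where the collection of worlds is given
as an indexed family (multiset view): `K p` iff `p` is in every member of the family,
`K̂ p` iff `p` is in some member. -/
def famSatLit {ι : Type} (W : ι → Val) (T : Val) : Lit → Prop
  | .obj p => p ∈ T
  | .k p => ∀ i, p ∈ W i
  | .khat p => ∃ i, p ∈ W i

def famSatB {ι : Type} (W : ι → Val) (T : Val) : BLit → Prop
  | .pos l => famSatLit W T l
  | .neg l => ¬ famSatLit W T l
  | .top => True
  | .bot => False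

def famSatRule {ι : Type} (W : ι → Val) (T : Val) (r : Rule) : Prop :=
  (∀ b ∈ r.body, famSatB W T b) → ∃ l ∈ r.head, famSatLit W T l

def famSatProg {ι : Type} (W : ι → Val) (T : Val) (P : Program) : Prop :=
  ∀ r ∈ P, famSatRule W T r

/-- Pointed S5 satisfaction of a literal, set-based collection of worlds. -/
def setSatLit (M : Set Val) (T : Val) : Lit → Prop
  | .obj p => p ∈ T
  | .k p => ∀ T' ∈ M, p ∈ T'
  | .khat p => ∃ T' ∈ M, p ∈ T'

def setSatB (M : Set Val) (T : Val) : BLit → Prop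
  | .pos l => setSatLit M T l
  | .neg l => ¬ setSatLit M T l
  | .top => True
  | .bot => False

def setSatRule (M : Set Val) (T : Val) (r : Rule) : Prop :=
  (∀ b ∈ r.body, setSatB M T b) → ∃ l ∈ r.head, setSatLit M T l

def setSatProg (M : Set Val) (T : Val) (P : Program) : Prop :=
  ∀ r ∈ P, setSatRule M T r

/-- Reduct of a body conjunct w.r.t. the pointed S5-model `(M, T)`:
`not λ` becomes ⊥ if `(M,T) ⊨ λ` and ⊤ otherwise; other conjuncts are unchanged. -/
noncomputable def reductB (M : Set Val) (T : Val) : BLit → BLit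
  | .pos l => .pos l
  | .neg l => if setSatLit M T l then .bot else .top
  | .top => .top
  | .bot => .bot

/-- The reduct `Π^⟨M,T⟩` of an EASP program w.r.t. the pointed S5-model `(M, T)`. -/
noncomputable def reduct (M : Set Val) (T : Val) (P : Program) : Program :=
  P.map (fun r => ⟨r.head, r.body.map (reductB M T)⟩)

/-- EHT formulas. -/
inductive Fml : Type where
  | atom : ℕ → Fml
  | bot : Fml
  | and : Fml → Fml → Fml
  | or : Fml → Fml → Fml
  | imp : Fml → Fml → Fml
  | k : Fml → Fml
  | khat : Fml → Fml

/-- EHT negation `¬φ := φ → ⊥`. -/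
def Fml.neg (φ : Fml) : Fml := .imp φ .bot

/-- EHT truth `⊤ := ¬⊥`. -/
def Fml.top : Fml := Fml.neg .bot

/-- Satisfaction in a functional EHT-model `⟨M, h⟩` at a point `T`. -/
def ehtSat (M : Set Val) : (Val → Val) → Val → Fml → Prop
  | h, T, .atom p => p ∈ h T
  | _, _, .bot => False
  | h, T, .and φ ψ => ehtSat M h T φ ∧ ehtSat M h T ψ
  | h, T, .or φ ψ => ehtSat M h T φ ∨ ehtSat M h T ψ
  | h, T, .imp φ ψ =>
      (ehtSat M h T φ → ehtSat M h T ψ) ∧ (ehtSat M id T φ → ehtSat M id T ψ)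
  | h, _, .k φ => ∀ T' ∈ M, ehtSat M h T' φ
  | h, _, .khat φ => ∃ T' ∈ M, ehtSat M h T' φ

/-- Translation of an EASP literal into an EHT formula. -/
def Lit.toFml : Lit → Fml
  | .obj p => .atom p
  | .k p => .k (.atom p)
  | .khat p => .khat (.atom p)

/-- Translation of a body conjunct into an EHT formula (`not` becomes EHT `¬`). -/
def BLit.toFml : BLit → Fml
  | .pos l => l.toFml
  | .neg l => Fml.neg l.toFml
  | .top => Fml.top
  | .bot => .bot

/-- Translation of a rule into the EHT implication body → head. -/
def Rule.toFml (r : Rule) : Fml :=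
  .imp (r.body.foldr (fun b acc => .and b.toFml acc) Fml.top)
       (r.head.foldr (fun l acc => .or l.toFml acc) .bot)

/-- The translation `Π*` of an EASP program: the conjunction of its rules. -/
def translate (P : Program) : Fml :=
  P.foldr (fun r acc => .and r.toFml acc) Fml.top

/-- Satisfaction in a relational EHT-model `M_ρ` over `M` at a point `(H, T)`.
The model `M_id` used in the implication clause corresponds to `ρ = fun X => {X}`. -/
def rehtSat (M : Set Val) : (Val → Set Val) → Val → Val → Fml → Prop
  | _, H, _, .atom p => p ∈ H
  | _, _, _, .bot => False
  | ρ, H, T, .and φ ψ => rehtSat M ρ H T φ ∧ rehtSat M ρ H T ψ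
  | ρ, H, T, .or φ ψ => rehtSat M ρ H T φ ∨ rehtSat M ρ H T ψ
  | ρ, H, T, .imp φ ψ =>
      (rehtSat M ρ H T φ → rehtSat M ρ H T ψ) ∧
      (rehtSat M (fun X => {X}) T T φ → rehtSat M (fun X => {X}) T T ψ)
  | ρ, _, _, .k φ => ∀ T' ∈ M, ∀ H' ∈ ρ T', rehtSat M ρ H' T' φ
  | ρ, _, _, .khat φ => ∃ T' ∈ M, ∃ H' ∈ ρ T', rehtSat M ρ H' T' φ

/-- `M` is a relational epistemic equilibrium model (EEM) of the EHT formula `φ`. -/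
def relEEM (M : Set Val) (φ : Fml) : Prop :=
  (∀ T ∈ M, rehtSat M (fun X => {X}) T T φ) ∧
    ∀ ρ : Val → Set Val,
      (∀ X ∈ M, (ρ X).Nonempty ∧ ∀ H ∈ ρ X, H ⊆ X) →
      (∃ X ∈ M, ρ X ≠ {X}) →
      ∃ T ∈ M, ∃ H ∈ ρ T, ¬ rehtSat M ρ H T φ

def IsSerialSubsetFn (M : Set Val) (ρ : Val → Set Val) : Prop :=
  ∀ X ∈ M, (ρ X).Nonempty ∧ ∀ H ∈ ρ X, H ⊆ X

abbrev hereFamily (M : Set Val) (ρ : Val → Set Val) :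
    {q : Val × Val // q.2 ∈ M ∧ q.1 ∈ ρ q.2} → Val :=
  fun x => x.1.1

noncomputable def Rule.reduct (M : Set Val) (T : Val) (r : Rule) : Rule :=
  ⟨r.head, r.body.map (reductB M T)⟩

theorem reduct_eq_map (M : Set Val) (T : Val) (P : Program) :
    reduct M T P = P.map (Rule.reduct M T) :=
  rfl

section Semantics

variable {M : Set Val} {ρ : Val → Set Val}

theorem famSatRule_reduct_iff {ι : Type} (W : ι → Val) (H T : Val) (r : Rule) :
    famSatRule W H (r.reduct M T) ↔
      ((∀ b ∈ r.body, famSatB W H (reductB M T b)) → ∃ l ∈ r.head, famSatLit W H l) := by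
  simp only [famSatRule, Rule.reduct, List.forall_mem_map]

theorem setSatRule_reduct_iff (T : Val) (r : Rule) :
    setSatRule M T (r.reduct M T) ↔
      ((∀ b ∈ r.body, setSatB M T (reductB M T b)) → ∃ l ∈ r.head, setSatLit M T l) := by
  simp only [setSatRule, Rule.reduct, List.forall_mem_map]

theorem rehtSat_imp_iff (H T : Val) (φ ψ : Fml) :
    rehtSat M ρ H T (.imp φ ψ) ↔
      (rehtSat M ρ H T φ → rehtSat M ρ H T ψ) ∧ rehtSat M (fun X => {X}) T T (.imp φ ψ) := by
  simp only [rehtSat, and_self]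

theorem rehtSat_top (H T : Val) : rehtSat M ρ H T Fml.top := by
  simp [Fml.top, Fml.neg, rehtSat]

theorem rehtSat_foldr_and (H T : Val) (L : List BLit) :
    rehtSat M ρ H T (L.foldr (fun b acc => .and b.toFml acc) Fml.top) ↔
      ∀ b ∈ L, rehtSat M ρ H T b.toFml := by
  induction L with
  | nil => simp [rehtSat_top]
  | cons b L ih => simp [rehtSat, ih]

theorem rehtSat_foldr_or (H T : Val) (L : List Lit) :
    rehtSat M ρ H T (L.foldr (fun l acc => .or l.toFml acc) .bot) ↔
      ∃ l ∈ L, rehtSat M ρ H T l.toFml := by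
  induction L with
  | nil => simp [rehtSat]
  | cons l L ih => simp [rehtSat, ih]

theorem rehtSat_translate_iff_forall (H T : Val) (P : Program) :
    rehtSat M ρ H T (translate P) ↔ ∀ r ∈ P, rehtSat M ρ H T r.toFml := by
  induction P with
  | nil => simp [translate, rehtSat_top]
  | cons r P ih => rw [List.forall_mem_cons, ← ih]; rfl

theorem rehtSat_lit_toFml_iff (H T : Val) (l : Lit) :
    rehtSat M ρ H T l.toFml ↔ famSatLit (hereFamily M ρ) H l := by
  cases l with
  | obj p => rfl
  | k p => exact ⟨fun h x => h _ x.2.1 _ x.2.2, fun h T' hT' H' hH' => h ⟨(H', T'), hT', hH'⟩⟩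
  | khat p =>
    exact ⟨fun ⟨T', hT', H', hH', hp⟩ => ⟨⟨(H', T'), hT', hH'⟩, hp⟩,
      fun ⟨x, hp⟩ => ⟨_, x.2.1, _, x.2.2, hp⟩⟩

theorem rehtSat_singleton_lit_toFml_iff (T : Val) (l : Lit) :
    rehtSat M (fun X => {X}) T T l.toFml ↔ setSatLit M T l := by
  cases l <;> simp [Lit.toFml, rehtSat, setSatLit]

theorem IsSerialSubsetFn.setSatLit_of_famSatLit (hρ : IsSerialSubsetFn M ρ) {H T : Val}
    (hT : T ∈ M) (hH : H ∈ ρ T) {l : Lit} (hl : famSatLit (hereFamily M ρ) H l) :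
    setSatLit M T l := by
  cases l with
  | obj p => exact (hρ T hT).2 H hH hl
  | k p =>
    intro T' hT'
    obtain ⟨H', hH'⟩ := (hρ T' hT').1
    exact (hρ T' hT').2 H' hH' (hl ⟨(H', T'), hT', hH'⟩)
  | khat p =>
    obtain ⟨⟨⟨H', T'⟩, hT', hH'⟩, hp⟩ := hl
    exact ⟨T', hT', (hρ T' hT').2 H' hH' hp⟩

theorem rehtSat_singleton_blit_toFml_iff (T : Val) (b : BLit) :
    rehtSat M (fun X => {X}) T T b.toFml ↔ setSatB M T (reductB M T b) := by
  cases b with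
  | pos l => exact rehtSat_singleton_lit_toFml_iff T l
  | neg l =>
    by_cases hl : setSatLit M T l <;>
      simp [BLit.toFml, Fml.neg, rehtSat, reductB, setSatB, hl,
        rehtSat_singleton_lit_toFml_iff]
  | top => exact iff_of_true (rehtSat_top T T) trivial
  | bot => simp [BLit.toFml, rehtSat, reductB, setSatB]

theorem IsSerialSubsetFn.rehtSat_blit_toFml_iff (hρ : IsSerialSubsetFn M ρ) {H T : Val}
    (hT : T ∈ M) (hH : H ∈ ρ T) (b : BLit) :
    rehtSat M ρ H T b.toFml ↔ famSatB (hereFamily M ρ) H (reductB M T b) := by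
  cases b with
  | pos l => exact rehtSat_lit_toFml_iff H T l
  | neg l =>
    have persist := mt (hρ.setSatLit_of_famSatLit hT hH (l := l))
    simp only [BLit.toFml, Fml.neg, rehtSat]
    rw [rehtSat_singleton_lit_toFml_iff, rehtSat_lit_toFml_iff]
    by_cases hl : setSatLit M T l <;> simp [reductB, famSatB, hl, persist]
  | top => exact iff_of_true (rehtSat_top H T) trivial
  | bot => simp [BLit.toFml, rehtSat, reductB, famSatB]

theorem rehtSat_singleton_rule_toFml_iff (T : Val) (r : Rule) :
    rehtSat M (fun X => {X}) T T r.toFml ↔ setSatRule M T (r.reduct M T) := by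
  simp only [Rule.toFml, rehtSat, and_self, rehtSat_foldr_and, rehtSat_foldr_or,
    rehtSat_singleton_blit_toFml_iff, rehtSat_singleton_lit_toFml_iff, setSatRule_reduct_iff]

theorem IsSerialSubsetFn.rehtSat_rule_toFml_iff (hρ : IsSerialSubsetFn M ρ) {H T : Val}
    (hT : T ∈ M) (hH : H ∈ ρ T) (r : Rule) :
    rehtSat M ρ H T r.toFml ↔
      famSatRule (hereFamily M ρ) H (r.reduct M T) ∧ rehtSat M (fun X => {X}) T T r.toFml := by
  refine (rehtSat_imp_iff H T _ _).trans (and_congr_left' ?_)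
  simp only [rehtSat_foldr_and, rehtSat_foldr_or, hρ.rehtSat_blit_toFml_iff hT hH,
    rehtSat_lit_toFml_iff, famSatRule_reduct_iff]

theorem rehtSat_singleton_translate_iff (T : Val) (P : Program) :
    rehtSat M (fun X => {X}) T T (translate P) ↔ setSatProg M T (reduct M T P) := by
  simp only [rehtSat_translate_iff_forall, setSatProg, reduct_eq_map, List.forall_mem_map,
    rehtSat_singleton_rule_toFml_iff]

theorem IsSerialSubsetFn.rehtSat_translate_iff (hρ : IsSerialSubsetFn M ρ) {H T : Val}
    (hT : T ∈ M) (hH : H ∈ ρ T) (P : Program) :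
    rehtSat M ρ H T (translate P) ↔
      famSatProg (hereFamily M ρ) H (reduct M T P) ∧
        rehtSat M (fun X => {X}) T T (translate P) := by
  simp only [rehtSat_translate_iff_forall, famSatProg, reduct_eq_map, List.forall_mem_map,
    hρ.rehtSat_rule_toFml_iff hT hH, forall_and]

end Semantics

theorem stmt5_general (P : Program) (M : Set Val) :
    relEEM M (translate P) ↔
      ((∀ T ∈ M, setSatProg M T (reduct M T P)) ∧
        ∀ ρ : Val → Set Val,
          (∀ X ∈ M, (ρ X).Nonempty ∧ ∀ H ∈ ρ X, H ⊆ X) →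
          (∃ X ∈ M, ρ X ≠ {X}) →
          ∃ T' ∈ M, ∃ H' ∈ ρ T',
            ¬ famSatProg (fun x : {q : Val × Val // q.2 ∈ M ∧ q.1 ∈ ρ q.2} => x.1.1)
                H' (reduct M T' P)) := by
  rw [relEEM, forall₂_congr fun T _ => rehtSat_singleton_translate_iff T P]
  refine and_congr_right fun hM => forall₂_congr fun ρ hρ => imp_congr_right fun _ => ?_
  refine exists_congr fun T => and_congr_right fun hT =>
    exists_congr fun H => and_congr_right fun hH => ?_
  have hTT := (rehtSat_singleton_translate_iff T P).mpr (hM T hT)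
  rw [IsSerialSubsetFn.rehtSat_translate_iff hρ hT hH, and_iff_left hTT]

/-- relational EEMs of `Π*` characterised via reducts in EASP. -/
theorem stmt5 (P : Program) (M : Set Val) (hne : M.Nonempty) :
    relEEM M (translate P) ↔
      ((∀ T ∈ M, setSatProg M T (reduct M T P)) ∧
        ∀ ρ : Val → Set Val,
          (∀ X ∈ M, (ρ X).Nonempty ∧ ∀ H ∈ ρ X, H ⊆ X) →
          (∃ X ∈ M, ρ X ≠ {X}) →
          ∃ T' ∈ M, ∃ H' ∈ ρ T',
            ¬ famSatProg (fun x : {q : Val × Val // q.2 ∈ M ∧ q.1 ∈ ρ q.2} => x.1.1)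
                H' (reduct M T' P)) :=
  stmt5_general P M

end EASP
end

section
/- Let Π be an EASP program and 𝒯 = {T_1, …, T_n} a nonempty finite collection of valuations. Then 𝒯 is a tfunctional-minimal model of Π if and only if: (i) the total EHT-model ⟨𝒯,id⟩ satisfies Π* at every point T_i, and (ii) for every j and every subset function h on 𝒯 with h(T_i) = T_i for all i ≠ j and h(T_j) ⊊ T_j, the functional EHT-model ⟨𝒯,h⟩ (explicitly {(h(T_i),T_i) : i = 1,…,n}) does not satisfy Π* at the point (h(T_j),T_j). -/
attribute [local instance] Classical.propDecidable

namespace EASP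

/-- `(M,T) ⊨*_f P` : `(M,T)` satisfies `P` and no functional weakening of `M` at `T`
(a map `h` with `h T ⊊ T` and `h T' = T'` for `T' ∈ M`, `T' ≠ T`) satisfies `P`
at the point `h T` in the model `h '' M`. -/
def satStarF (M : Set Val) (T : Val) (P : Program) : Prop :=
  setSatProg M T P ∧
    ∀ h : Val → Val, h T ⊂ T → (∀ T' ∈ M, T' ≠ T → h T' = T') →
      ¬ setSatProg (h '' M) (h T) P

/-- `(M,T) ⊨*_r P` : `(M,T)` satisfies `P` and for every relational weakening
`S` of `M` at `T` (a nonempty set of subsets of `T` containing a strict subset of `T`),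
some designated point `H ∈ S` refutes `P` in the model `(M \ {T}) ∪ S`. -/
def satStarR (M : Set Val) (T : Val) (P : Program) : Prop :=
  setSatProg M T P ∧
    ∀ S : Set Val, S.Nonempty → (∀ H ∈ S, H ⊆ T) → (∃ H ∈ S, H ⊂ T) →
      ∃ H ∈ S, ¬ setSatProg ((M \ {T}) ∪ S) H P

/-- `M` is a tfunctional-minimal model of `P`. -/
def tfunMinimal (M : Set Val) (P : Program) : Prop :=
  M.Nonempty ∧ ∀ T ∈ M, satStarF M T (reduct M T P)

/-- `M` is a trelational-minimal model of `P`. -/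
def trelMinimal (M : Set Val) (P : Program) : Prop :=
  M.Nonempty ∧ ∀ T ∈ M, satStarR M T (reduct M T P)

/-! In a functional EHT-model `⟨M, h⟩` with `h T' ⊆ T'`, an implication is evaluated both at `h`
and at the total model `id`. A literal true at `h` is true at `id` (the worlds only grow), so `¬λ`
holds at `h` exactly when `λ` fails in `(M, T)` — which is what the reduct replaces `not λ` by.
Hence `⟨M, h⟩, T ⊨ Π*` says that `(h '' M, h T)` and `(M, T)` both satisfy `Π^⟨M,T⟩`, and the two
sides of the theorem unfold to the same condition. -/

section Translation

variable {M : Set Val} {h : Val → Val} {T : Val}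

lemma ehtSat_lit_toFml (l : Lit) :
    ehtSat M h T l.toFml ↔ setSatLit (h '' M) (h T) l := by
  cases l <;> simp [Lit.toFml, ehtSat, setSatLit]

lemma setSatLit_of_setSatLit_image (hsub : ∀ T' ∈ M, h T' ⊆ T') (hT : T ∈ M) (l : Lit) :
    setSatLit (h '' M) (h T) l → setSatLit M T l := by
  cases l with
  | obj p => exact fun hp => hsub T hT hp
  | k p => exact fun hk T' hT' => hsub T' hT' (hk (h T') ⟨T', hT', rfl⟩)
  | khat p =>
    rintro ⟨_, ⟨T', hT', rfl⟩, hp⟩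
    exact ⟨T', hT', hsub T' hT' hp⟩

lemma ehtSat_bLit_toFml (hsub : ∀ T' ∈ M, h T' ⊆ T') (hT : T ∈ M) (b : BLit) :
    ehtSat M h T b.toFml ↔ setSatB (h '' M) (h T) (reductB M T b) := by
  have hid (l : Lit) : ehtSat M id T l.toFml ↔ setSatLit M T l := by
    simpa using ehtSat_lit_toFml (M := M) (h := id) (T := T) l
  cases b with
  | pos l => exact ehtSat_lit_toFml l
  | neg l =>
    simp only [BLit.toFml, Fml.neg, ehtSat, reductB, hid, ehtSat_lit_toFml, imp_false]
    by_cases hl : setSatLit M T l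
    · simp [hl, setSatB]
    · simp [hl, setSatB, mt (setSatLit_of_setSatLit_image hsub hT l) hl]
  | top => simp [BLit.toFml, Fml.top, Fml.neg, ehtSat, reductB, setSatB]
  | bot => simp [BLit.toFml, ehtSat, reductB, setSatB]

lemma ehtSat_foldr_and (L : List BLit) :
    ehtSat M h T (L.foldr (fun b acc => .and b.toFml acc) Fml.top) ↔
      ∀ b ∈ L, ehtSat M h T b.toFml := by
  induction L with
  | nil => simp [Fml.top, Fml.neg, ehtSat]
  | cons b L ih => simp [ehtSat, ih]

lemma ehtSat_foldr_or (L : List Lit) :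
    ehtSat M h T (L.foldr (fun l acc => .or l.toFml acc) .bot) ↔
      ∃ l ∈ L, ehtSat M h T l.toFml := by
  induction L with
  | nil => simp [ehtSat]
  | cons l L ih => simp [ehtSat, ih]

lemma ehtSat_translate (P : Program) :
    ehtSat M h T (translate P) ↔ ∀ r ∈ P, ehtSat M h T r.toFml := by
  induction P with
  | nil => simp [translate, Fml.top, Fml.neg, ehtSat]
  | cons r P ih => rw [List.forall_mem_cons, ← ih]; rfl

lemma setSatProg_reduct (M' : Set Val) (T' : Val) (P : Program) :
    setSatProg M' T' (reduct M T P) ↔ ∀ r ∈ P,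
      (∀ b ∈ r.body, setSatB M' T' (reductB M T b)) → ∃ l ∈ r.head, setSatLit M' T' l := by
  simp [setSatProg, reduct, setSatRule]

lemma ehtSat_translate_iff (hsub : ∀ T' ∈ M, h T' ⊆ T') (hT : T ∈ M) (P : Program) :
    ehtSat M h T (translate P) ↔
      setSatProg (h '' M) (h T) (reduct M T P) ∧ setSatProg M T (reduct M T P) := by
  have hid : ∀ T' ∈ M, id T' ⊆ T' := fun _ _ => subset_rfl
  rw [setSatProg_reduct, setSatProg_reduct, ← forall₂_and, ehtSat_translate]
  refine forall₂_congr fun r _ => ?_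
  simp only [Rule.toFml, ehtSat, ehtSat_foldr_and, ehtSat_foldr_or, ehtSat_bLit_toFml hsub hT,
    ehtSat_bLit_toFml hid hT, ehtSat_lit_toFml, Set.image_id', id_eq]

lemma ehtSat_id_translate_iff (hT : T ∈ M) (P : Program) :
    ehtSat M id T (translate P) ↔ setSatProg M T (reduct M T P) := by
  rw [ehtSat_translate_iff (h := id) (fun _ _ => subset_rfl) hT, Set.image_id, id_eq, and_self]

end Translation

lemma subset_of_weakening {M : Set Val} {h : Val → Val} {T : Val}
    (hfix : ∀ T' ∈ M, T' ≠ T → h T' = T') (hlt : h T ⊂ T) : ∀ T' ∈ M, h T' ⊆ T' := by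
  intro T' hT'
  by_cases hTT : T' = T
  · exact hTT ▸ hlt.subset
  · exact (hfix T' hT' hTT).subset

theorem stmt6_general (P : Program) (M : Set Val) (hne : M.Nonempty) :
    tfunMinimal M P ↔
      ((∀ T ∈ M, ehtSat M id T (translate P)) ∧
        ∀ T ∈ M, ∀ h : Val → Val,
          (∀ T' ∈ M, T' ≠ T → h T' = T') → h T ⊂ T →
            ¬ ehtSat M h T (translate P)) := by
  constructor
  · rintro ⟨-, hmin⟩
    refine ⟨fun T hT => (ehtSat_id_translate_iff hT P).2 (hmin T hT).1,
      fun T hT h hfix hlt hsat => ?_⟩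
    rw [ehtSat_translate_iff (subset_of_weakening hfix hlt) hT] at hsat
    exact (hmin T hT).2 h hlt hfix hsat.1
  · rintro ⟨htotal, hweak⟩
    refine ⟨hne, fun T hT => ⟨(ehtSat_id_translate_iff hT P).1 (htotal T hT), ?_⟩⟩
    intro h hlt hfix hsat
    refine hweak T hT h hfix hlt ((ehtSat_translate_iff (subset_of_weakening hfix hlt) hT P).2 ?_)
    exact ⟨hsat, (ehtSat_id_translate_iff hT P).1 (htotal T hT)⟩

/-- tfunctional-minimal models of `Π` characterised in EHT. -/
theorem stmt6 (P : Program) (M : Set Val) (hfin : M.Finite) (hne : M.Nonempty) :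
    tfunMinimal M P ↔
      ((∀ T ∈ M, ehtSat M id T (translate P)) ∧
        ∀ T ∈ M, ∀ h : Val → Val,
          (∀ T' ∈ M, T' ≠ T → h T' = T') → h T ⊂ T →
            ¬ ehtSat M h T (translate P)) :=
  stmt6_general P M hne

end EASP
end

section
/- For every EHT formula φ: (i) ¬K̂φ and K¬φ are EHT-equivalent, and (ii) K̂¬φ and ¬Kφ are EHT-equivalent; that is, for every functional EHT-model ⟨𝒯,h⟩ and every T ∈ 𝒯, ⟨𝒯,h⟩,T ⊨ ¬K̂φ iff ⟨𝒯,h⟩,T ⊨ K¬φ, and ⟨𝒯,h⟩,T ⊨ K̂¬φ iff ⟨𝒯,h⟩,T ⊨ ¬Kφ. -/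
attribute [local instance] Classical.propDecidable

namespace EASP

/-! Truth in `⟨M, h⟩` persists to `⟨M, id⟩`, so `¬ψ` holds exactly when `ψ` fails in `⟨M, id⟩`;
there `K` and `K̂` are the classical `∀` and `∃` over `M`, and both equivalences become the De Morgan
duality between them. -/

variable {M : Set Val} {h : Val → Val}

theorem ehtSat_id_of_ehtSat (hsub : ∀ T ∈ M, h T ⊆ T) :
    ∀ {φ : Fml} {T : Val}, T ∈ M → ehtSat M h T φ → ehtSat M id T φ
  | .atom _, T, hT, hp => hsub T hT hp
  | .bot, _, _, hp => hp
  | .and _ _, _, hT, ⟨hφ, hψ⟩ =>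
    ⟨ehtSat_id_of_ehtSat hsub hT hφ, ehtSat_id_of_ehtSat hsub hT hψ⟩
  | .or _ _, _, hT, .inl hφ => .inl (ehtSat_id_of_ehtSat hsub hT hφ)
  | .or _ _, _, hT, .inr hψ => .inr (ehtSat_id_of_ehtSat hsub hT hψ)
  | .imp _ _, _, _, ⟨_, hid⟩ => ⟨hid, hid⟩
  | .k _, _, _, hk => fun T' hT' => ehtSat_id_of_ehtSat hsub hT' (hk T' hT')
  | .khat _, _, _, ⟨T', hT', hs⟩ => ⟨T', hT', ehtSat_id_of_ehtSat hsub hT' hs⟩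

theorem ehtSat_neg_iff {T : Val} {φ : Fml} (hpers : ehtSat M h T φ → ehtSat M id T φ) :
    ehtSat M h T φ.neg ↔ ¬ehtSat M id T φ :=
  ⟨fun hn => hn.2, fun hid => ⟨fun hs => hid (hpers hs), hid⟩⟩

theorem ehtSat_neg_iff_of_mem (hsub : ∀ T ∈ M, h T ⊆ T) {T : Val} (hT : T ∈ M) {φ : Fml} :
    ehtSat M h T φ.neg ↔ ¬ehtSat M id T φ :=
  ehtSat_neg_iff (ehtSat_id_of_ehtSat hsub hT)

theorem stmt10_general (φ : Fml) (M : Set Val)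
    (h : Val → Val) (hsub : ∀ T ∈ M, h T ⊆ T) (T : Val) :
    (ehtSat M h T (Fml.neg (.khat φ)) ↔ ehtSat M h T (.k (Fml.neg φ))) ∧
    (ehtSat M h T (.khat (Fml.neg φ)) ↔ ehtSat M h T (Fml.neg (.k φ))) := by
  have neg_khat : ehtSat M h T (Fml.neg (.khat φ)) ↔ ¬ehtSat M id T (.khat φ) :=
    ehtSat_neg_iff fun ⟨T', hT', hs⟩ => ⟨T', hT', ehtSat_id_of_ehtSat hsub hT' hs⟩
  have neg_k : ehtSat M h T (Fml.neg (.k φ)) ↔ ¬ehtSat M id T (.k φ) :=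
    ehtSat_neg_iff fun hk T' hT' => ehtSat_id_of_ehtSat hsub hT' (hk T' hT')
  rw [neg_khat, neg_k]
  simp only [ehtSat]
  push Not
  exact ⟨forall₂_congr fun _ hT' => (ehtSat_neg_iff_of_mem hsub hT').symm,
    exists_congr fun _ => and_congr_right fun hT' => ehtSat_neg_iff_of_mem hsub hT'⟩

/-- ¬K̂φ ≡ K¬φ and K̂¬φ ≡ ¬Kφ in EHT. -/
theorem stmt10 (φ : Fml) (M : Set Val) (hne : M.Nonempty)
    (h : Val → Val) (hsub : ∀ T ∈ M, h T ⊆ T) (T : Val) (hT : T ∈ M) :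
    (ehtSat M h T (Fml.neg (.khat φ)) ↔ ehtSat M h T (.k (Fml.neg φ))) ∧
    (ehtSat M h T (.khat (Fml.neg φ)) ↔ ehtSat M h T (Fml.neg (.k φ))) :=
  stmt10_general φ M h hsub T

end EASP
end

section
/- Let a, b be distinct atoms and let Φ be the EASP program consisting of the three rules: a ∨ b; a ← K b; b ← K a. Then the S5-model {{a},{b}} is a trelational-minimal model of Φ (and hence also a tfunctional-minimal model of Φ). -/
attribute [local instance] Classical.propDecidable

namespace EASP

/-- The program Φ = { a ∨ b ;  a ← K b ;  b ← K a }. -/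
def Phi (a b : ℕ) : Program :=
  [⟨[.obj a, .obj b], []⟩,
   ⟨[.obj a], [.pos (.k b)]⟩,
   ⟨[.obj b], [.pos (.k a)]⟩]

lemma satStarF_of_satStarR {M : Set Val} {T : Val} {P : Program} (hT : T ∈ M)
    (h : satStarR M T P) : satStarF M T P := by
  refine ⟨h.1, fun f hfT hfix => ?_⟩
  -- a functional weakening `f` is the relational weakening `{f T}`
  have himage : f '' M = (M \ {T}) ∪ {f T} := by
    ext U
    constructor
    · rintro ⟨T', hT', rfl⟩
      by_cases hT'T : T' = T
      · exact .inr (by rw [hT'T]; rfl)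
      · exact .inl ⟨by rwa [hfix T' hT' hT'T], by rwa [hfix T' hT' hT'T]⟩
    · rintro (⟨hU, hUT⟩ | rfl)
      · exact ⟨U, hU, hfix U hU hUT⟩
      · exact ⟨T, hT, rfl⟩
  obtain ⟨H, rfl, hH⟩ := h.2 {f T} (Set.singleton_nonempty _)
    (fun H hH => hH ▸ hfT.subset) ⟨f T, rfl, hfT⟩
  rwa [himage]

lemma tfunMinimal_of_trelMinimal {M : Set Val} {P : Program} (h : trelMinimal M P) :
    tfunMinimal M P :=
  ⟨h.1, fun T hT => satStarF_of_satStarR hT (h.2 T hT)⟩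

lemma satStarR_of_forall_ssubset {M : Set Val} {T : Val} {P : Program}
    (hsat : setSatProg M T P) (hmin : ∀ (M' : Set Val) (H : Val), H ⊂ T → ¬ setSatProg M' H P) :
    satStarR M T P :=
  ⟨hsat, fun _ _ _ ⟨H, hHS, hHT⟩ => ⟨H, hHS, hmin _ H hHT⟩⟩

lemma not_setSatProg_empty_of_fact {M : Set Val} {P : Program} {head : List Lit}
    (hfact : ⟨head, []⟩ ∈ P) (hobj : ∀ l ∈ head, ∃ p, l = .obj p) :
    ¬ setSatProg M ∅ P := by
  intro hsat
  obtain ⟨l, hl, hsatl⟩ := hsat _ hfact (fun _ hb => absurd hb List.not_mem_nil)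
  obtain ⟨p, rfl⟩ := hobj l hl
  exact hsatl

lemma reduct_Phi (M : Set Val) (T : Val) (a b : ℕ) : reduct M T (Phi a b) = Phi a b := rfl

lemma setSatProg_Phi {a b : ℕ} (hab : a ≠ b) {T : Val}
    (hT : T ∈ ({({a} : Val), ({b} : Val)} : Set Val)) :
    setSatProg {({a} : Val), ({b} : Val)} T (Phi a b) := by
  intro r hr hbody
  simp only [Phi, List.mem_cons, List.not_mem_nil, or_false] at hr
  rcases hr with rfl | rfl | rfl
  · rcases hT with rfl | rfl
    · exact ⟨.obj a, by simp, rfl⟩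
    · exact ⟨.obj b, by simp, rfl⟩
  · have hb : b ∈ ({a} : Val) := hbody (.pos (.k b)) (by simp) {a} (by simp)
    exact absurd hb.symm hab
  · have ha : a ∈ ({b} : Val) := hbody (.pos (.k a)) (by simp) {b} (by simp)
    exact absurd ha hab

/-- {{a},{b}} is trelational-minimal (hence tfunctional-minimal) for Φ. -/
theorem stmt11 (a b : ℕ) (hab : a ≠ b) :
    trelMinimal {({a} : Val), ({b} : Val)} (Phi a b) ∧
      tfunMinimal {({a} : Val), ({b} : Val)} (Phi a b) := by
  have hrel : trelMinimal {({a} : Val), ({b} : Val)} (Phi a b) := by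
    refine ⟨⟨{a}, by simp⟩, fun T hT => ?_⟩
    rw [reduct_Phi]
    refine satStarR_of_forall_ssubset (setSatProg_Phi hab hT) fun _ H hH => ?_
    -- both worlds are singletons, so their only strict subset is `∅`
    obtain ⟨p, rfl⟩ : ∃ p, T = {p} := by rcases hT with rfl | rfl <;> exact ⟨_, rfl⟩
    rw [Set.ssubset_singleton_iff.mp hH]
    exact not_setSatProg_empty_of_fact (head := [.obj a, .obj b]) (by simp [Phi])
      (by simp)
  exact ⟨hrel, tfunMinimal_of_trelMinimal hrel⟩

end EASP
end
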